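/- arXiv:2502.12647 — 2 statements merged into one kernel-verified Lean document; each statement's English description precedes it below -/
import Mathlib

section
/- The Gauss equation holds in Riemann-Cartan geometry: for a submanifold M of a Riemann-Cartan manifold M̃, R̃(W,X,Y,Z) = R(W,X,Y,Z) - ⟨Î(W,Z), Î(X,Y)⟩ + ⟨Î(W,Y), Î(X,Z)⟩ for all tangent vector fields W,X,Y,Z on M, where R̃ is the ambient Riemann curvature, R is the curvature of the induced (tangential projection) connection on M, and Î is the second fundamental form. -/
/-- The Gauss equation in Riemann-Cartan geometry.  For a submanifold `M`
of a Riemann-Cartan manifold `M̃`,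
`R̃(W,X,Y,Z) = R(W,X,Y,Z) - ⟪Î(W,Z), Î(X,Y)⟫ + ⟪Î(W,Y), Î(X,Z)⟫`
for all tangent vector fields `W,X,Y,Z` on `M`, where `R̃` is the ambient Riemann
curvature, `R` the curvature of the induced connection `∇_X Y = (∇̃_X Y)^⊤` on `M`, and
`Î(X,Y) = (∇̃_X Y)^⊥` the second fundamental form.

Algebraic formalization: `V` is the module of ambient vector fields over the ring `A`
of smooth functions, with Lie bracket `bracket` acting on functions as the commutator of
the derivation actions `D`, ambient metric-compatible connection `nabla`, metric
`inner`, orthogonal decomposition `top` (tangential) / `perp` (normal) along `M`, and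
`tangent` the tangency predicate. -/
theorem stmt_3
    {A : Type*} [CommRing A]
    {V : Type*} [AddCommGroup V] [Module A V]
    (bracket : V → V → V)
    (D : V → A → A)
    (nabla : V → V → V)
    (inner : V → V → A)
    (top perp : V →+ V)
    (hdecomp : ∀ v, top v + perp v = v)
    (horth : ∀ v w, inner (top v) (perp w) = 0)
    (tangent : V → Prop)
    (htangent : ∀ v, tangent v ↔ top v = v)
    (hbracket_tangent : ∀ X Y, tangent X → tangent Y → tangent (bracket X Y))
    (hbracketD : ∀ X Y f, D (bracket X Y) f = D X (D Y f) - D Y (D X f))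
    (hD_add : ∀ X f g, D X (f + g) = D X f + D X g)
    (hD_leibniz : ∀ X f g, D X (f * g) = D X f * g + f * D X g)
    (hsymm : ∀ X Y, inner X Y = inner Y X)
    (hinner_add_left : ∀ X Y Z, inner (X + Y) Z = inner X Z + inner Y Z)
    (hnabla_add : ∀ X Y Z, nabla X (Y + Z) = nabla X Y + nabla X Z)
    (hcompat : ∀ X Y Z, D X (inner Y Z) = inner (nabla X Y) Z + inner Y (nabla X Z)) :
    -- Gauss equation: for tangent W, X, Y, Z,
    -- ⟪R̃(W,X)Y, Z⟫ = ⟪R(W,X)Y, Z⟫ - ⟪Î(W,Z), Î(X,Y)⟫ + ⟪Î(W,Y), Î(X,Z)⟫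
    ∀ W X Y Z : V, tangent W → tangent X → tangent Y → tangent Z →
      inner (nabla W (nabla X Y) - nabla X (nabla W Y) - nabla (bracket W X) Y) Z
        = inner (top (nabla W (top (nabla X Y))) - top (nabla X (top (nabla W Y)))
              - top (nabla (bracket W X) Y)) Z
          - inner (perp (nabla W Z)) (perp (nabla X Y))
          + inner (perp (nabla W Y)) (perp (nabla X Z)) := by

  intro W X Y Z hW hX hY hZ
  have hD0 : ∀ u : V, D u (0 : A) = 0 := by
    intro u
    have h := hD_add u 0 0
    rw [add_zero] at h
    exact (left_eq_add.mp h)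
  have hinner_add_right : ∀ a b c : V, inner a (b + c) = inner a b + inner a c := by
    intro a b c
    rw [hsymm, hinner_add_left, hsymm b a, hsymm c a]
  have hinner_sub_left : ∀ a b c : V, inner (a - b) c = inner a c - inner b c := by
    intro a b c
    have h := hinner_add_left (a - b) b c
    rw [sub_add_cancel] at h
    exact eq_sub_of_add_eq h.symm
  have hperpZ : ∀ v z : V, tangent z → inner (perp v) z = 0 := by
    intro v z hz
    rw [← (htangent z).mp hz, hsymm, horth]
  have htopZ : ∀ v z : V, tangent z → inner v z = inner (top v) z := by
    intro v z hz
    conv_lhs => rw [← hdecomp v]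
    rw [hinner_add_left, hperpZ v z hz, add_zero]
  have hkey : ∀ u v z : V, tangent z →
      inner (nabla u (perp v)) z = - inner (perp v) (perp (nabla u z)) := by
    intro u v z hz
    have h := hcompat u (perp v) z
    rw [hperpZ v z hz, hD0] at h
    have h2 : inner (perp v) (nabla u z) = inner (perp v) (perp (nabla u z)) := by
      conv_lhs => rw [← hdecomp (nabla u z)]
      rw [hinner_add_right]
      have h3 : inner (perp v) (top (nabla u z)) = 0 := by rw [hsymm]; exact horth _ _
      rw [h3, zero_add]
    rw [h2] at h
    linear_combination -h
  have hterm : ∀ u v : V,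
      inner (nabla u v) Z
        = inner (top (nabla u (top v))) Z - inner (perp v) (perp (nabla u Z)) := by
    intro u v
    conv_lhs => rw [← hdecomp v]
    rw [hnabla_add, hinner_add_left, hkey u v Z hZ, htopZ (nabla u (top v)) Z hZ]
    ring
  rw [hinner_sub_left, hinner_sub_left, hinner_sub_left, hinner_sub_left,
    hterm W (nabla X Y), hterm X (nabla W Y), htopZ (nabla (bracket W X) Y) Z hZ,
    hsymm (perp (nabla W Z)) (perp (nabla X Y))]
  ring
end

section
/- Let θ : U → ℝ and e : U → S² be smooth maps on an open set U ⊆ ℝⁿ, and let g = exp(θ ê) : U → SO(3). Then the pullback of the Maurer-Cartan form satisfies g⁻¹ dg = dθ · ê + sin(θ) · d(ê) + (1 - cos(θ)) · (de × e)^, where (de × e)^ denotes the hat of the ℝ³-valued 1-form de × e. -/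
open Matrix

attribute [local instance] Matrix.frobeniusNormedAddCommGroup Matrix.frobeniusNormedSpace

/-- The hat map: the cross product matrix of `e ∈ ℝ³`, i.e. the skew-symmetric matrix
representing `x ↦ e × x`. -/
def hat (e : Fin 3 → ℝ) : Matrix (Fin 3) (Fin 3) ℝ :=
  !![0, -e 2, e 1; e 2, 0, -e 0; -e 1, e 0, 0]

attribute [local instance] Matrix.frobeniusNormedRing Matrix.frobeniusNormedAlgebra


noncomputable def hatL : (Fin 3 → ℝ) →L[ℝ] Matrix (Fin 3) (Fin 3) ℝ :=
  LinearMap.toContinuousLinearMap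
  { toFun := hat
    map_add' := by
      intro a b; ext i j; fin_cases i <;> fin_cases j <;> simp [hat] <;> ring
    map_smul' := by
      intro c a; ext i j; fin_cases i <;> fin_cases j <;> simp [hat] <;> ring }

lemma hatL_apply (w : Fin 3 → ℝ) : hatL w = hat w := rfl

lemma hat_cube (a : Fin 3 → ℝ) (h : a ⬝ᵥ a = 1) :
    hat a * hat a * hat a = -(hat a) := by
  obtain ⟨a0, a1, a2, rfl⟩ : ∃ x y z, a = ![x, y, z] :=
    ⟨a 0, a 1, a 2, by ext i; fin_cases i <;> rfl⟩
  rw [dotProduct, Fin.sum_univ_three] at h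
  simp only [Matrix.cons_val_zero, Matrix.cons_val_one, Matrix.head_cons,
    Matrix.cons_val_two, Matrix.tail_cons] at h
  ext i j
  fin_cases i <;> fin_cases j <;>
    simp [hat, Matrix.mul_apply, Fin.sum_univ_three] <;>
    first
      | ring1
      | linear_combination a0 * h
      | linear_combination (-a0) * h
      | linear_combination a1 * h
      | linear_combination (-a1) * h
      | linear_combination a2 * h
      | linear_combination (-a2) * h

set_option maxHeartbeats 2000000 in
lemma key_alg (a b : Fin 3 → ℝ) (s c tv : ℝ) (hsc : s * s + c * c = 1)
    (ha' : a ⬝ᵥ a = 1) (hab' : a ⬝ᵥ b = 0) :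
    (1 - s • hat a + (1 - c) • (hat a * hat a)) *
      (s • hat b + (c * tv) • hat a +
        ((1 - c) • (hat a * hat b + hat b * hat a) + (s * tv) • (hat a * hat a)))
    = tv • hat a + s • hat b + (1 - c) • hat (crossProduct b a) := by
  obtain ⟨a0, a1, a2, rfl⟩ : ∃ x y z, a = ![x, y, z] :=
    ⟨a 0, a 1, a 2, by ext i; fin_cases i <;> rfl⟩
  obtain ⟨b0, b1, b2, rfl⟩ : ∃ x y z, b = ![x, y, z] :=
    ⟨b 0, b 1, b 2, by ext i; fin_cases i <;> rfl⟩
  rw [dotProduct, Fin.sum_univ_three] at ha' hab'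
  simp only [Matrix.cons_val_zero, Matrix.cons_val_one, Matrix.head_cons,
    Matrix.cons_val_two, Matrix.tail_cons] at ha' hab'
  have ha : a0 * a0 + a1 * a1 + a2 * a2 = 1 := ha'
  have hab : a0 * b0 + a1 * b1 + a2 * b2 = 0 := hab'
  ext i j
  fin_cases i <;> fin_cases j <;>
    simp [hat, Matrix.mul_apply, Fin.sum_univ_three, crossProduct]
  · linear_combination (a2*b2 + (-2)*a2*b2*c + a2*b2*c*c + a2*a2*s*tv + (-1)*a2*a2*s*c*tv + a1*b1 + (-2)*a1*b1*c + a1*b1*c*c + a1*a1*s*tv + (-1)*a1*a1*s*c*tv) * ha + (a2*a2 + (-2)*a2*a2*c + a2*a2*c*c + a1*a1 + (-2)*a1*a1*c + a1*a1*c*c) * hab + (a2*b2 + a1*b1) * hsc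
  · linear_combination ((-1)*a2*tv + a2*c*tv + (-1)*a1*b0 + 2*a1*b0*c + (-1)*a1*b0*c*c + (-1)*a0*a1*s*tv + a0*a1*s*c*tv) * ha + ((-1)*a2*s + a2*s*c + (-1)*a0*a1 + 2*a0*a1*c + (-1)*a0*a1*c*c) * hab + ((-1)*a2*a2*a2*tv + (-1)*a1*b0 + (-1)*a1*a1*a2*tv + (-1)*a0*a0*a2*tv) * hsc
  · linear_combination ((-1)*a2*b0 + 2*a2*b0*c + (-1)*a2*b0*c*c + a1*tv + (-1)*a1*c*tv + (-1)*a0*a2*s*tv + a0*a2*s*c*tv) * ha + (a1*s + (-1)*a1*s*c + (-1)*a0*a2 + 2*a0*a2*c + (-1)*a0*a2*c*c) * hab + ((-1)*a2*b0 + a1*a2*a2*tv + a1*a1*a1*tv + a0*a0*a1*tv) * hsc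
  · linear_combination (a2*tv + (-1)*a2*c*tv + (-1)*a0*b1 + 2*a0*b1*c + (-1)*a0*b1*c*c + (-1)*a0*a1*s*tv + a0*a1*s*c*tv) * ha + (a2*s + (-1)*a2*s*c + (-1)*a0*a1 + 2*a0*a1*c + (-1)*a0*a1*c*c) * hab + (a2*a2*a2*tv + a1*a1*a2*tv + (-1)*a0*b1 + a0*a0*a2*tv) * hsc
  · linear_combination (a2*a2*s*tv + (-1)*a2*a2*s*c*tv + (-1)*a1*b1 + 2*a1*b1*c + (-1)*a1*b1*c*c + a0*a0*s*tv + (-1)*a0*a0*s*c*tv) * ha + ((-1) + 2*c + (-1)*c*c + 2*a2*a2 + (-4)*a2*a2*c + 2*a2*a2*c*c + a1*a1 + (-2)*a1*a1*c + a1*a1*c*c + 2*a0*a0 + (-4)*a0*a0*c + 2*a0*a0*c*c) * hab + (a2*b2 + a0*b0) * hsc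
  · linear_combination ((-1)*a2*b1 + 2*a2*b1*c + (-1)*a2*b1*c*c + (-1)*a1*a2*s*tv + a1*a2*s*c*tv + (-1)*a0*tv + a0*c*tv) * ha + ((-1)*a1*a2 + 2*a1*a2*c + (-1)*a1*a2*c*c + (-1)*a0*s + a0*s*c) * hab + ((-1)*a2*b1 + (-1)*a0*a2*a2*tv + (-1)*a0*a1*a1*tv + (-1)*a0*a0*a0*tv) * hsc
  · linear_combination ((-1)*a1*tv + a1*c*tv + (-1)*a0*b2 + 2*a0*b2*c + (-1)*a0*b2*c*c + (-1)*a0*a2*s*tv + a0*a2*s*c*tv) * ha + ((-1)*a1*s + a1*s*c + (-1)*a0*a2 + 2*a0*a2*c + (-1)*a0*a2*c*c) * hab + ((-1)*a1*a2*a2*tv + (-1)*a1*a1*a1*tv + (-1)*a0*b2 + (-1)*a0*a0*a1*tv) * hsc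
  · linear_combination ((-1)*a1*b2 + 2*a1*b2*c + (-1)*a1*b2*c*c + (-1)*a1*a2*s*tv + a1*a2*s*c*tv + a0*tv + (-1)*a0*c*tv) * ha + ((-1)*a1*a2 + 2*a1*a2*c + (-1)*a1*a2*c*c + a0*s + (-1)*a0*s*c) * hab + ((-1)*a1*b2 + a0*a2*a2*tv + a0*a1*a1*tv + a0*a0*a0*tv) * hsc
  · linear_combination ((-1)*a2*b2 + 2*a2*b2*c + (-1)*a2*b2*c*c + a1*a1*s*tv + (-1)*a1*a1*s*c*tv + a0*a0*s*tv + (-1)*a0*a0*s*c*tv) * ha + ((-1) + 2*c + (-1)*c*c + a2*a2 + (-2)*a2*a2*c + a2*a2*c*c + 2*a1*a1 + (-4)*a1*a1*c + 2*a1*a1*c*c + 2*a0*a0 + (-4)*a0*a0*c + 2*a0*a0*c*c) * hab + (a1*b1 + a0*b0) * hsc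

lemma rodrigues (A : Matrix (Fin 3) (Fin 3) ℝ) (hA : A * A * A = -A) (t : ℝ) :
    NormedSpace.exp (t • A) = 1 + Real.sin t • A + (1 - Real.cos t) • (A * A) := by
  have hA' : A * (A * A) = -A := by rw [← mul_assoc]; exact hA
  set R : ℝ → Matrix (Fin 3) (Fin 3) ℝ :=
    fun u => 1 + Real.sin u • A + (1 - Real.cos u) • (A * A) with hR
  have key : ∀ u : ℝ, NormedSpace.exp (u • (-A)) * R u = 1 := by
    have hd : ∀ u : ℝ,
        HasDerivAt (fun u => NormedSpace.exp (u • (-A)) * R u) 0 u := by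
      intro u
      have h1 : HasDerivAt (fun u : ℝ => NormedSpace.exp (u • (-A)))
          (NormedSpace.exp (u • (-A)) * (-A)) u :=
        hasDerivAt_exp_smul_const (-A) u
      have h2 : HasDerivAt R (Real.cos u • A + Real.sin u • (A * A)) u := by
        have hs : HasDerivAt (fun u : ℝ => Real.sin u • A) (Real.cos u • A) u :=
          (Real.hasDerivAt_sin u).smul_const A
        have hc : HasDerivAt (fun u : ℝ => (1 - Real.cos u) • (A * A))
            (Real.sin u • (A * A)) u := by
          have := ((hasDerivAt_const u (1:ℝ)).sub (Real.hasDerivAt_cos u)).smul_const (A * A)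
          simp at this; exact this
        exact (((hasDerivAt_const u (1 : Matrix (Fin 3) (Fin 3) ℝ)).add hs).add hc).congr_deriv (by rw [zero_add])
      have h3 := h1.mul h2
      have h4 : NormedSpace.exp (u • (-A)) * -A * R u
          + NormedSpace.exp (u • (-A)) * (Real.cos u • A + Real.sin u • (A * A)) = 0 := by
        rw [mul_assoc, ← mul_add]
        have expand : (-A) * R u + (Real.cos u • A + Real.sin u • (A * A)) = 0 := by
          rw [hR]
          simp only [mul_add, mul_one, Matrix.mul_smul, neg_mul, hA', neg_neg]
          module
        rw [expand, mul_zero]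
      rw [← h4]; exact h3
    have hdiff : Differentiable ℝ (fun u => NormedSpace.exp (u • (-A)) * R u) :=
      fun u => (hd u).differentiableAt
    have hconst := is_const_of_fderiv_eq_zero hdiff (fun u => by
      have := (hd u).hasFDerivAt.fderiv
      refine this.trans ?_; ext y; simp; rfl)
    intro u
    calc NormedSpace.exp (u • (-A)) * R u
        = NormedSpace.exp ((0:ℝ) • (-A)) * R 0 := hconst u 0
      _ = 1 := by simp [hR, NormedSpace.exp_zero]
  have hinv : NormedSpace.exp (t • A) * NormedSpace.exp (t • (-A)) = 1 := by
    rw [← Matrix.exp_add_of_commute]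
    · simp [NormedSpace.exp_zero]
    · simpa using (Commute.refl A).smul_left (t) |>.smul_right (t) |>.neg_right
  calc NormedSpace.exp (t • A)
      = NormedSpace.exp (t • A) * (NormedSpace.exp (t • (-A)) * R t) := by
        rw [key t, mul_one]
    _ = R t := by rw [← mul_assoc, hinv, one_mul]


/-- Let `θ : U → ℝ` and `e : U → S²` be smooth maps on an open set
`U ⊆ ℝⁿ`, and let `g = exp(θ ê) : U → SO(3)`.  Then the pullback of the Maurer-Cartan
form satisfies
`g⁻¹ dg = dθ · ê + sin(θ) · d(ê) + (1 - cos(θ)) · (de × e)^`,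
where `(de × e)^` is the hat of the `ℝ³`-valued 1-form `de × e`.  Here `d` is the
(within-`U`) differential applied to a tangent vector `v`, and `d(ê) = (de)^` since the
hat map is linear. -/
theorem stmt_13 {n : ℕ} (U : Set (EuclideanSpace ℝ (Fin n))) (hU : IsOpen U)
    (θ : EuclideanSpace ℝ (Fin n) → ℝ)
    (e : EuclideanSpace ℝ (Fin n) → (Fin 3 → ℝ))
    (hθ : ContDiffOn ℝ (⊤ : ℕ∞) θ U) (he : ContDiffOn ℝ (⊤ : ℕ∞) e U)
    (hsphere : ∀ x ∈ U, e x ⬝ᵥ e x = 1)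
    (g : EuclideanSpace ℝ (Fin n) → Matrix (Fin 3) (Fin 3) ℝ)
    (hg : ∀ x ∈ U, g x = NormedSpace.exp (θ x • hat (e x))) :
    ∀ x ∈ U, ∀ v : EuclideanSpace ℝ (Fin n),
      (g x)⁻¹ * (fderivWithin ℝ g U x v)
        = (fderivWithin ℝ θ U x v) • hat (e x)
          + Real.sin (θ x) • hat (fderivWithin ℝ e U x v)
          + (1 - Real.cos (θ x)) • hat (crossProduct (fderivWithin ℝ e U x v) (e x)) := by
  intro x hx v
  have hUD : UniqueDiffWithinAt ℝ U x := hU.uniqueDiffWithinAt hx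
  have hde : DifferentiableOn ℝ e U := he.differentiableOn (by simp)
  have hdθ : DifferentiableOn ℝ θ U := hθ.differentiableOn (by simp)
  have De : HasFDerivWithinAt e (fderivWithin ℝ e U x) U x := (hde x hx).hasFDerivWithinAt
  have Dθ : HasFDerivWithinAt θ (fderivWithin ℝ θ U x) U x := (hdθ x hx).hasFDerivWithinAt
  have hA3 : hat (e x) * hat (e x) * hat (e x) = -(hat (e x)) := hat_cube _ (hsphere x hx)
  -- orthogonality of e and its derivative
  have horth : e x ⬝ᵥ fderivWithin ℝ e U x v = 0 := by
    have comp : ∀ i : Fin 3, HasFDerivWithinAt (fun y => e y i)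
        ((ContinuousLinearMap.proj i).comp (fderivWithin ℝ e U x)) U x := by
      intro i
      have hp : HasFDerivAt (fun w : Fin 3 → ℝ => w i)
          (ContinuousLinearMap.proj i : (Fin 3 → ℝ) →L[ℝ] ℝ) (e x) :=
        ContinuousLinearMap.hasFDerivAt (f := (ContinuousLinearMap.proj i : (Fin 3 → ℝ) →L[ℝ] ℝ))
      exact (hp.comp_hasFDerivWithinAt x De).congr (fun y _ => rfl) rfl
    have hdot : HasFDerivWithinAt (fun y => e y 0 * e y 0 + e y 1 * e y 1 + e y 2 * e y 2)
        (((e x 0) • ((ContinuousLinearMap.proj (0:Fin 3)).comp (fderivWithin ℝ e U x))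
            + (e x 0) • ((ContinuousLinearMap.proj (0:Fin 3)).comp (fderivWithin ℝ e U x)))
          + ((e x 1) • ((ContinuousLinearMap.proj (1:Fin 3)).comp (fderivWithin ℝ e U x))
            + (e x 1) • ((ContinuousLinearMap.proj (1:Fin 3)).comp (fderivWithin ℝ e U x)))
          + ((e x 2) • ((ContinuousLinearMap.proj (2:Fin 3)).comp (fderivWithin ℝ e U x))
            + (e x 2) • ((ContinuousLinearMap.proj (2:Fin 3)).comp (fderivWithin ℝ e U x)))) U x := by
      exact (((comp 0).mul (comp 0)).add ((comp 1).mul (comp 1))).add ((comp 2).mul (comp 2))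
    have hconst : HasFDerivWithinAt (fun y => e y 0 * e y 0 + e y 1 * e y 1 + e y 2 * e y 2)
        (0 : EuclideanSpace ℝ (Fin n) →L[ℝ] ℝ) U x := by
      refine (hasFDerivWithinAt_const (1:ℝ) x U).congr (fun y hy => ?_) ?_
      · have := hsphere y hy; rw [dotProduct, Fin.sum_univ_three] at this; linarith
      · have := hsphere x hx; rw [dotProduct, Fin.sum_univ_three] at this; linarith
    have := hUD.eq hdot hconst
    have happ := congrArg (fun (L : EuclideanSpace ℝ (Fin n) →L[ℝ] ℝ) => L v) this
    simp only [ContinuousLinearMap.add_apply, ContinuousLinearMap.smul_apply,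
      ContinuousLinearMap.comp_apply, ContinuousLinearMap.proj_apply,
      ContinuousLinearMap.zero_apply, smul_eq_mul] at happ
    rw [dotProduct, Fin.sum_univ_three]
    linarith
  -- the Rodrigues form of g on U
  set R : EuclideanSpace ℝ (Fin n) → Matrix (Fin 3) (Fin 3) ℝ :=
    fun y => 1 + Real.sin (θ y) • hat (e y) + (1 - Real.cos (θ y)) • (hat (e y) * hat (e y))
    with hRdef
  have hgR : ∀ y ∈ U, g y = R y := by
    intro y hy
    rw [hg y hy, rodrigues _ (hat_cube _ (hsphere y hy))]
  -- derivative pieces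
  have hsin : HasFDerivWithinAt (fun y => Real.sin (θ y))
      (Real.cos (θ x) • fderivWithin ℝ θ U x) U x :=
    (Real.hasDerivAt_sin (θ x)).comp_hasFDerivWithinAt x Dθ
  have hcos1 : HasFDerivWithinAt (fun y => 1 - Real.cos (θ y))
      (Real.sin (θ x) • fderivWithin ℝ θ U x) U x := by
    have h := (Real.hasDerivAt_cos (θ x)).comp_hasFDerivWithinAt x Dθ
    have h2 := (hasFDerivWithinAt_const (1:ℝ) x U).sub h
    exact h2.congr_fderiv (by simp)
  have hhat : HasFDerivWithinAt (fun y => hat (e y))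
      (hatL.comp (fderivWithin ℝ e U x)) U x :=
    by
    have hp : HasFDerivAt (fun w : Fin 3 → ℝ => hat w) hatL (e x) :=
      ContinuousLinearMap.hasFDerivAt (f := hatL)
    exact (hp.comp_hasFDerivWithinAt x De).congr (fun y _ => rfl) rfl
  have hR : HasFDerivWithinAt R
      ((Real.sin (θ x) • (hatL.comp (fderivWithin ℝ e U x))
          + (Real.cos (θ x) • fderivWithin ℝ θ U x).smulRight (hat (e x)))
        + ((1 - Real.cos (θ x)) • (hat (e x) • (hatL.comp (fderivWithin ℝ e U x))
              + (hatL.comp (fderivWithin ℝ e U x)).smulRight (hat (e x)))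
          + (Real.sin (θ x) • fderivWithin ℝ θ U x).smulRight (hat (e x) * hat (e x)))) U x := by
    have := ((hsin.smul hhat).const_add (1 : Matrix (Fin 3) (Fin 3) ℝ)).add (hcos1.smul (hhat.mul' hhat))
    refine this.congr_fderiv ?_
    ext v : 1
    rfl
  have hfg : fderivWithin ℝ g U x = fderivWithin ℝ R U x :=
    fderivWithin_congr hgR (hgR x hx)
  have hfR := hR.fderivWithin hUD
  -- the inverse of g
  have hginv : (g x)⁻¹ = 1 - Real.sin (θ x) • hat (e x)
      + (1 - Real.cos (θ x)) • (hat (e x) * hat (e x)) := by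
    have h1 : g x * NormedSpace.exp ((-(θ x)) • hat (e x)) = 1 := by
      rw [hg x hx, ← Matrix.exp_add_of_commute]
      · rw [← add_smul]; simp [NormedSpace.exp_zero]
      · simpa using ((Commute.refl (hat (e x))).smul_left (θ x)).smul_right (-(θ x))
    have h2 := Matrix.inv_eq_right_inv h1
    rw [h2, rodrigues _ hA3 (-(θ x))]
    simp [Real.sin_neg, Real.cos_neg, neg_smul]
    abel
  rw [hfg, hfR, hginv]
  simp only [ContinuousLinearMap.add_apply, ContinuousLinearMap.smul_apply,
    ContinuousLinearMap.smulRight_apply, ContinuousLinearMap.comp_apply, hatL_apply,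
    smul_eq_mul]
  have hsc : Real.sin (θ x) * Real.sin (θ x) + Real.cos (θ x) * Real.cos (θ x) = 1 := by
    rw [← Real.sin_sq_add_cos_sq (θ x)]; ring
  exact key_alg (e x) (fderivWithin ℝ e U x v) _ _ _ hsc (hsphere x hx) horth
end
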